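/- Generating-function differential identity: let Φ(φ) = ∑_{n=0}^m e^{(m-n)φ} f_n be a polynomial in e^φ with complex coefficients f_n, interpreted as the expectation ⟨exp(φ ∑_{j=1}^m P_j)⟩ where P_j are commuting idempotent operators (projectors onto down-spin at site j) under a linear functional ⟨·⟩ with ⟨1⟩ = 1. If S_j^z = 1/2 − P_j, then ⟨S_1^z S_m^z⟩ = (1/4)(2 D_m² ∂_φ² − 4 D_m ∂_φ + 1) Φ(φ|m)|_{φ=0}, where D_m z_m = z_m − z_{m−1} is the lattice derivative acting on the sequence indexed by m, and Φ(φ|m) denotes the generating function for segment length m, provided ⟨·⟩ is translation invariant in the sense that ⟨∏_{j=a}^{b} e^{φ P_j}⟩ depends only on b−a+1. -/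

import Mathlib

open Finset Complex

private lemma coef1 (k : ℕ) : (k:ℂ) * (0:ℂ)^(k-1) = if k = 1 then 1 else 0 := by
  match k with
  | 0 => simp
  | 1 => simp
  | (n+2) => simp [pow_succ]

private lemma coef2 (k : ℕ) :
    (k:ℂ) * ((k-1 : ℕ):ℂ) * (0:ℂ)^(k-2) = if k = 2 then 2 else 0 := by
  match k with
  | 0 => simp
  | 1 => simp
  | 2 => norm_num
  | (n+3) => simp [pow_succ]

private lemma hasDerivAt_term (k : ℕ) (c φ : ℂ) :
    HasDerivAt (fun φ : ℂ => (Complex.exp φ - 1)^k * c)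
      ((k:ℂ) * (Complex.exp φ - 1)^(k-1) * Complex.exp φ * c) φ :=
  (((Complex.hasDerivAt_exp φ).sub_const 1).pow k).mul_const c

private lemma hasDerivAt_term2 (k : ℕ) (c φ : ℂ) :
    HasDerivAt (fun φ : ℂ => (k:ℂ) * (Complex.exp φ - 1)^(k-1) * Complex.exp φ * c)
      (((k:ℂ) * (((k-1 : ℕ)):ℂ) * (Complex.exp φ - 1)^(k-2) * Complex.exp φ * Complex.exp φ
        + (k:ℂ) * (Complex.exp φ - 1)^(k-1) * Complex.exp φ) * c) φ := by
  have h1 : HasDerivAt (fun φ : ℂ => (k:ℂ) * (Complex.exp φ - 1)^(k-1))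
      ((k:ℂ) * (((k-1:ℕ):ℂ) * (Complex.exp φ - 1)^((k-1)-1) * Complex.exp φ)) φ :=
    (((Complex.hasDerivAt_exp φ).sub_const 1).pow (k-1)).const_mul _
  have h3 := (h1.mul (Complex.hasDerivAt_exp φ)).mul_const c
  refine h3.congr_deriv ?_
  have h4 : (k-1)-1 = k-2 := by omega
  rw [h4]; ring

private lemma prod_smul_eq {Alg : Type*} [CommRing Alg] [Algebra ℂ Alg] (t : ℂ) (P : ℕ → Alg)
    (S : Finset ℕ) : ∏ j ∈ S, (t • P j) = t ^ S.card • ∏ j ∈ S, P j := by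
  induction S using Finset.induction with
  | empty => simp
  | insert a s h ih =>
    rw [prod_insert h, prod_insert h, ih, card_insert_of_notMem h, smul_mul_smul_comm, pow_succ']

private lemma expand_seg {Alg : Type*} [CommRing Alg] [Algebra ℂ Alg] (P : ℕ → Alg)
    (E : Alg →ₗ[ℂ] ℂ) (s : Finset ℕ) (φ : ℂ) :
    E (∏ j ∈ s, (1 + (Complex.exp φ - 1) • P j)) =
      ∑ S ∈ s.powerset, (Complex.exp φ - 1)^S.card * E (∏ j ∈ S, P j) := by
  have h1 : ∏ j ∈ s, (1 + (Complex.exp φ - 1) • P j)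
      = ∏ j ∈ s, ((Complex.exp φ - 1) • P j + 1) := by simp [add_comm]
  rw [h1, Finset.prod_add]
  simp only [prod_const_one, mul_one, prod_smul_eq]
  rw [map_sum]
  exact Finset.sum_congr rfl fun S _ => by rw [map_smul, smul_eq_mul]

private lemma derivs_of_seg {Alg : Type*} [CommRing Alg] [Algebra ℂ Alg] (P : ℕ → Alg)
    (E : Alg →ₗ[ℂ] ℂ) (s : Finset ℕ) (Ψ : ℂ → ℂ)
    (hΨ : Ψ = fun φ => E (∏ j ∈ s, (1 + (Complex.exp φ - 1) • P j))) :
    deriv Ψ 0 = ∑ j ∈ s, E (P j) ∧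
      deriv (deriv Ψ) 0 = ∑ j ∈ s, E (P j)
        + 2 * ∑ S ∈ s.powersetCard 2, E (∏ j ∈ S, P j) := by
  classical
  set c : Finset ℕ → ℂ := fun S => E (∏ j ∈ S, P j) with hc
  have hΨ' : Ψ = fun φ => ∑ S ∈ s.powerset, (Complex.exp φ - 1)^S.card * c S := by
    rw [hΨ]; funext φ; exact expand_seg P E s φ
  have hd1 : ∀ φ, HasDerivAt Ψ
      (∑ S ∈ s.powerset, (S.card:ℂ) * (Complex.exp φ - 1)^(S.card-1) * Complex.exp φ * c S) φ := by
    intro φ; rw [hΨ']; exact HasDerivAt.fun_sum fun S _ => hasDerivAt_term _ _ _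
  have hD1 : deriv Ψ = fun φ =>
      ∑ S ∈ s.powerset, (S.card:ℂ) * (Complex.exp φ - 1)^(S.card-1) * Complex.exp φ * c S :=
    funext fun φ => (hd1 φ).deriv
  have hd2 : ∀ φ, HasDerivAt (deriv Ψ)
      (∑ S ∈ s.powerset, ((S.card:ℂ) * ((S.card-1:ℕ):ℂ) * (Complex.exp φ - 1)^(S.card-2)
          * Complex.exp φ * Complex.exp φ
        + (S.card:ℂ) * (Complex.exp φ - 1)^(S.card-1) * Complex.exp φ) * c S) φ := by
    intro φ; rw [hD1]; exact HasDerivAt.fun_sum fun S _ => hasDerivAt_term2 _ _ _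
  constructor
  · rw [(hd1 0).deriv]
    simp only [Complex.exp_zero, sub_self, mul_one, coef1, ite_mul, one_mul, zero_mul]
    rw [← Finset.sum_filter, ← powersetCard_eq_filter, powersetCard_one, Finset.sum_map]
    exact Finset.sum_congr rfl fun j _ => by simp [hc]
  · rw [(hd2 0).deriv]
    simp only [Complex.exp_zero, sub_self, mul_one, coef1, coef2, add_mul, ite_mul,
      one_mul, zero_mul]
    rw [Finset.sum_add_distrib, ← Finset.sum_filter, ← Finset.sum_filter,
      ← powersetCard_eq_filter, ← powersetCard_eq_filter, powersetCard_one, Finset.sum_map,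
      ← Finset.mul_sum, add_comm]
    congr 1
    exact Finset.sum_congr rfl fun j _ => by simp [hc]

private lemma e2_insert {Alg : Type*} [CommRing Alg] [Algebra ℂ Alg] (P : ℕ → Alg)
    (E : Alg →ₗ[ℂ] ℂ) {x : ℕ} {s : Finset ℕ} (hx : x ∉ s) :
    ∑ S ∈ (insert x s).powersetCard 2, E (∏ j ∈ S, P j)
      = ∑ S ∈ s.powersetCard 2, E (∏ j ∈ S, P j) + ∑ j ∈ s, E (P x * P j) := by
  classical
  rw [show (2:ℕ) = Nat.succ 1 from rfl, powersetCard_succ_insert hx 1]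
  have hdisj : Disjoint (powersetCard (Nat.succ 1) s) ((powersetCard 1 s).image (insert x)) := by
    rw [Finset.disjoint_left]
    intro S hS hS'
    have h1 : S ⊆ s := (mem_powersetCard.mp hS).1
    obtain ⟨T, _, rfl⟩ := mem_image.mp hS'
    exact hx (h1 (mem_insert_self x T))
  rw [Finset.sum_union hdisj]
  congr 1
  rw [Finset.sum_image ?hinj]
  case hinj =>
    intro S hS T hT h
    have hxS : x ∉ S := fun h' => hx ((mem_powersetCard.mp hS).1 h')
    have hxT : x ∉ T := fun h' => hx ((mem_powersetCard.mp hT).1 h')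
    rw [← Finset.erase_insert hxS, ← Finset.erase_insert hxT, h]
  rw [powersetCard_one, Finset.sum_map]
  refine Finset.sum_congr rfl fun j hj => ?_
  have hxj : x ∉ ({j} : Finset ℕ) := by
    simp only [mem_singleton]
    rintro rfl; exact hx hj
  simp [Finset.prod_insert hxj]

private lemma szsz_lhs {Alg : Type*} [CommRing Alg] [Algebra ℂ Alg] (P : ℕ → Alg)
    (E : Alg →ₗ[ℂ] ℂ) (hE1 : E 1 = 1) (m : ℕ) :
    E ((algebraMap ℂ Alg (1/2) - P 1) * (algebraMap ℂ Alg (1/2) - P m)) =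
      1/4 - (1/2) * E (P 1) - (1/2) * E (P m) + E (P m * P 1) := by
  have hx : (algebraMap ℂ Alg (1/2) - P 1) * (algebraMap ℂ Alg (1/2) - P m)
      = ((1:ℂ)/4) • (1:Alg) - ((1:ℂ)/2) • P 1 - ((1:ℂ)/2) • P m + P m * P 1 := by
    simp only [Algebra.smul_def, mul_one]
    rw [show ((1:ℂ)/4) = (1/2) * (1/2) by norm_num, map_mul]
    ring
  rw [hx, map_add, map_sub, map_sub, map_smul, map_smul, map_smul, hE1, smul_eq_mul,
    smul_eq_mul, smul_eq_mul, mul_one]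

/-- Generating-function identity for the two-point function `⟨S_1^z S_m^z⟩`:
if `Φ(φ|ℓ)` is the (translation invariant) generating function
`⟨∏_{j=a}^{a+ℓ-1} e^{φ P_j}⟩ = ⟨∏_{j=a}^{a+ℓ-1} (1 + (e^φ - 1) P_j)⟩` of a
linear functional `⟨·⟩` evaluated on commuting idempotents `P_j` (projectors
onto down-spin), and `S_j^z = 1/2 − P_j`, then
`⟨S_1^z S_m^z⟩ = (1/4)(2 D_m² ∂_φ² − 4 D_m ∂_φ + 1) Φ(φ|m)|_{φ=0}`,
where `D_m` is the backward difference in the length argument and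
`Φ(φ|0) = 1`. -/
theorem szsz_from_generating_function (m : ℕ) (hm : 2 ≤ m)
    {Alg : Type*} [CommRing Alg] [Algebra ℂ Alg]
    (P : ℕ → Alg) (hidem : ∀ j, P j * P j = P j)
    (E : Alg →ₗ[ℂ] ℂ) (hE1 : E 1 = 1)
    (Φ : ℂ → ℕ → ℂ) (hΦ0 : ∀ φ : ℂ, Φ φ 0 = 1)
    (hΦ : ∀ φ : ℂ, ∀ a b : ℕ, 1 ≤ a → a ≤ b → b ≤ m →
      E (∏ j ∈ Finset.Icc a b, (1 + (Complex.exp φ - 1) • P j)) = Φ φ (b - a + 1)) :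
    E ((algebraMap ℂ Alg (1/2) - P 1) * (algebraMap ℂ Alg (1/2) - P m)) =
      (1/4) *
        (2 * (deriv (deriv (fun φ => Φ φ m)) 0
              - 2 * deriv (deriv (fun φ => Φ φ (m - 1))) 0
              + deriv (deriv (fun φ => Φ φ (m - 2))) 0)
          - 4 * (deriv (fun φ => Φ φ m) 0 - deriv (fun φ => Φ φ (m - 1)) 0)
          + Φ 0 m) := by
  classical
  have hA : (fun φ => Φ φ m)
      = fun φ => E (∏ j ∈ Finset.Icc 1 m, (1 + (Complex.exp φ - 1) • P j)) := by
    funext φ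
    have h := hΦ φ 1 m le_rfl (by omega) le_rfl
    rw [show m - 1 + 1 = m by omega] at h
    exact h.symm
  have hA' : (fun φ => Φ φ (m-1))
      = fun φ => E (∏ j ∈ Finset.Icc 1 (m-1), (1 + (Complex.exp φ - 1) • P j)) := by
    funext φ
    have h := hΦ φ 1 (m-1) le_rfl (by omega) (by omega)
    rw [show m - 1 - 1 + 1 = m - 1 by omega] at h
    exact h.symm
  have hA'' : (fun φ => Φ φ (m-1))
      = fun φ => E (∏ j ∈ Finset.Icc 2 m, (1 + (Complex.exp φ - 1) • P j)) := by
    funext φ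
    have h := hΦ φ 2 m (by omega) (by omega) le_rfl
    rw [show m - 2 + 1 = m - 1 by omega] at h
    exact h.symm
  have hA''' : (fun φ => Φ φ (m-2))
      = fun φ => E (∏ j ∈ Finset.Icc 2 (m-1), (1 + (Complex.exp φ - 1) • P j)) := by
    funext φ
    rcases eq_or_lt_of_le hm with h2 | h3
    · rw [show Finset.Icc 2 (m-1) = ∅ by rw [Finset.Icc_eq_empty_iff]; omega]
      rw [show m - 2 = 0 by omega, hΦ0]
      simp [hE1]
    · have h := hΦ φ 2 (m-1) (by omega) (by omega) (by omega)
      rw [show m - 1 - 2 + 1 = m - 2 by omega] at h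
      exact h.symm
  have hΦ0m : Φ 0 m = 1 := by
    have h := congrFun hA 0
    simpa [Complex.exp_zero, hE1] using h
  obtain ⟨F1, F5⟩ := derivs_of_seg P E _ _ hA
  obtain ⟨F2, F6⟩ := derivs_of_seg P E _ _ hA'
  obtain ⟨F3, F7⟩ := derivs_of_seg P E _ _ hA''
  obtain ⟨F4, F8⟩ := derivs_of_seg P E _ _ hA'''
  have hmem1 : m ∉ Finset.Icc 1 (m-1) := by simp only [Finset.mem_Icc]; omega
  have hmem2 : m ∉ Finset.Icc 2 (m-1) := by simp only [Finset.mem_Icc]; omega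
  have hmem3 : (1:ℕ) ∉ Finset.Icc 2 (m-1) := by simp only [Finset.mem_Icc]; omega
  have iA : Finset.Icc 1 m = insert m (Finset.Icc 1 (m-1)) := by
    ext x; simp only [Finset.mem_Icc, Finset.mem_insert]; omega
  have iB : Finset.Icc 2 m = insert m (Finset.Icc 2 (m-1)) := by
    ext x; simp only [Finset.mem_Icc, Finset.mem_insert]; omega
  have iC : Finset.Icc 1 (m-1) = insert 1 (Finset.Icc 2 (m-1)) := by
    ext x; simp only [Finset.mem_Icc, Finset.mem_insert]; omega
  rw [iA] at F1 F5
  simp only [Finset.sum_insert hmem1, e2_insert P E hmem1] at F1 F5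
  rw [iC] at F1 F5 F2 F6
  simp only [Finset.sum_insert hmem3] at F1 F5 F2 F6
  rw [iB] at F3 F7
  simp only [Finset.sum_insert hmem2, e2_insert P E hmem2] at F3 F7
  rw [szsz_lhs P E hE1 m, hΦ0m]
  linear_combination (-(1/2:ℂ))*F5 + (1/2:ℂ)*F6 + (1/2:ℂ)*F7 - (1/2:ℂ)*F8
    + F1 - (1/2:ℂ)*F2 - (1/2:ℂ)*F3
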